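/- arXiv:2001.02607 — 4 statements merged into one kernel-verified Lean document; each statement's English description precedes it below -/
import Mathlib

section
/- Let X be a compact subset of a Banach space B such that X − X is (α,β)-almost (M,s)-homogeneous at the origin for some M ≥ 1, s ≥ 0, α, β ≥ 0. Then the upper box-counting dimension of X − X is at most β + s; in particular it is finite. -/
open Metric Set Filter Pointwise
open Topology

/-- The symmetric logarithm. -/
noncomputable def slog (x : ℝ) : ℝ := Real.log (x + 1/x)

/-- `Z` is `(α,β)`-almost `(M,s)`-homogeneous at the origin: every ball `B(0,r) ∩ Z`
can be covered by `N ≤ M (r/ρ)^s slog(r)^α slog(ρ)^β` balls of radius `ρ` with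
centres in `Z`. -/
def AlmostHomogeneousAtOrigin {B : Type*} [NormedAddCommGroup B]
    (Z : Set B) (M s α β : ℝ) : Prop :=
  ∀ r ρ : ℝ, 0 < ρ → ρ < r →
    ∃ t : Finset B, ↑t ⊆ Z ∧ (Z ∩ Metric.ball 0 r ⊆ ⋃ z ∈ t, Metric.ball z ρ) ∧
      (t.card : ℝ) ≤ M * (r/ρ) ^ s * slog r ^ α * slog ρ ^ β

/-- The minimal number of `ε`-balls with centres in `Z` needed to cover `Z`. -/
noncomputable def coverNum {B : Type*} [NormedAddCommGroup B] (Z : Set B) (ε : ℝ) : ℕ :=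
  sInf {n : ℕ | ∃ t : Finset B, t.card = n ∧ ↑t ⊆ Z ∧ Z ⊆ ⋃ z ∈ t, Metric.ball z ε}

set_option maxHeartbeats 1600000 in
theorem boxDim_le_of_almostHomogeneousAtOrigin
    {B : Type*} [NormedAddCommGroup B] [NormedSpace ℝ B] [CompleteSpace B]
    (X : Set B) (hX : IsCompact X)
    (M s α β : ℝ) (hM : 1 ≤ M) (hs : 0 ≤ s) (hα : 0 ≤ α) (hβ : 0 ≤ β)
    (hhom : AlmostHomogeneousAtOrigin (X - X) M s α β) :
    Filter.limsup (fun ε : ℝ => Real.log (coverNum (X - X) ε) / (-Real.log ε))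
      (nhdsWithin 0 (Set.Ioi 0)) ≤ β + s := by
  set Z : Set B := X - X with hZdef
  -- `X` is bounded, hence so is `Z`.
  obtain ⟨R, hR⟩ := (isBounded_iff_subset_ball (0 : B)).1 hX.isBounded
  set r : ℝ := max (2 * R) 3 with hrdef
  have hr3 : (3 : ℝ) ≤ r := le_max_right _ _
  have hr0 : (0 : ℝ) < r := by linarith
  have hZr : Z ⊆ ball (0 : B) r := by
    rintro z hz
    obtain ⟨x, hx, y, hy, rfl⟩ := hz
    have hxR : ‖x‖ < R := by simpa [mem_ball, dist_eq_norm] using hR hx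
    have hyR : ‖y‖ < R := by simpa [mem_ball, dist_eq_norm] using hR hy
    have : ‖x - y‖ < 2 * R := by
      calc ‖x - y‖ ≤ ‖x‖ + ‖y‖ := norm_sub_le _ _
        _ < 2 * R := by linarith
    simp only [mem_ball, dist_eq_norm, sub_zero]
    exact this.trans_le (le_max_left _ _)
  have hslogr : (1 : ℝ) ≤ slog r := by
    rw [slog, Real.le_log_iff_exp_le (by positivity)]
    have h1 : Real.exp 1 ≤ 3 := by
      have := Real.exp_one_lt_d9
      linarith
    have : (0:ℝ) < 1 / r := by positivity
    linarith
  set C : ℝ := Real.log M + s * Real.log r + α * Real.log (slog r) with hCdef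
  have hC0 : 0 ≤ C := by
    have h1 : 0 ≤ Real.log M := Real.log_nonneg hM
    have h2 : 0 ≤ Real.log r := Real.log_nonneg (by linarith)
    have h3 : 0 ≤ Real.log (slog r) := Real.log_nonneg hslogr
    positivity
  set g : ℝ → ℝ := fun ε => C / (-Real.log ε) + (s + β) with hgdef
  have hglim : Tendsto g (𝓝[>] (0:ℝ)) (𝓝 (0 + (s + β))) := by
    apply Tendsto.add_const
    exact Tendsto.div_atTop tendsto_const_nhds
      (tendsto_neg_atBot_atTop.comp Real.tendsto_log_nhdsGT_zero)
  have hmem : Set.Ioo (0:ℝ) (1/3) ∈ 𝓝[>] (0:ℝ) :=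
    Ioo_mem_nhdsGT_of_mem ⟨le_refl 0, by norm_num⟩
  -- the key pointwise bound
  have hkey : ∀ ε ∈ Set.Ioo (0:ℝ) (1/3),
      Real.log (coverNum Z ε) / (-Real.log ε) ≤ g ε := by
    rintro ε ⟨hε0, hε3⟩
    have hεr : ε < r := by linarith
    have hlogε : 0 < -Real.log ε := by
      have := Real.log_neg hε0 (by linarith : ε < 1)
      linarith
    obtain ⟨t, htZ, htcov, htcard⟩ := hhom r ε hε0 hεr
    have hcov : Z ⊆ ⋃ z ∈ t, ball z ε := fun x hx => htcov ⟨hx, hZr hx⟩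
    have hcnN : coverNum Z ε ≤ t.card := by
      apply Nat.sInf_le
      exact ⟨t, rfl, htZ, hcov⟩
    have hcn : (coverNum Z ε : ℝ) ≤ (t.card : ℝ) := by exact_mod_cast hcnN
    have hcn' : (coverNum Z ε : ℝ) ≤ M * (r/ε) ^ s * slog r ^ α * slog ε ^ β :=
      hcn.trans htcard
    -- positivity/1-lower-bounds of the factors
    have hrε1 : (1 : ℝ) ≤ r / ε := (one_le_div hε0).2 (by linarith)
    have hA1 : (1 : ℝ) ≤ (r / ε) ^ s := Real.one_le_rpow hrε1 hs
    have hA0 : (0 : ℝ) < (r / ε) ^ s := by positivity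
    have hinvε : (3 : ℝ) < 1 / ε := by
      rw [lt_div_iff₀ hε0]; linarith
    have hsloge : (1 : ℝ) ≤ slog ε := by
      rw [slog, Real.le_log_iff_exp_le (by positivity)]
      have h1 : Real.exp 1 ≤ 3 := by
        have := Real.exp_one_lt_d9
        linarith
      linarith
    have hBr1 : (1 : ℝ) ≤ slog r ^ α := Real.one_le_rpow hslogr hα
    have hCe1 : (1 : ℝ) ≤ slog ε ^ β := Real.one_le_rpow hsloge hβ
    have hBr0 : (0 : ℝ) < slog r ^ α := by linarith
    have hCe0 : (0 : ℝ) < slog ε ^ β := by linarith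
    have hRHS1 : (1 : ℝ) ≤ M * (r/ε) ^ s * slog r ^ α * slog ε ^ β := by
      have p1 : (1 : ℝ) ≤ M * (r/ε) ^ s := by nlinarith
      have p2 : (1 : ℝ) ≤ M * (r/ε) ^ s * slog r ^ α := by nlinarith
      nlinarith
    -- bound for `slog ε`
    have hslogε_le : slog ε ≤ 1 / ε := by
      have h1 : ε + 1/ε ≤ 2 / ε := by
        have hεle : ε ≤ 1 / ε := by
          rw [le_div_iff₀ hε0]; nlinarith
        have h2e : 2 / ε = 1/ε + 1/ε := by ring
        linarith
      have h2 : Real.log (ε + 1/ε) ≤ Real.log (2 / ε) :=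
        Real.log_le_log (by positivity) h1
      have h3 : Real.log (2 / ε) = Real.log 2 + Real.log (1/ε) := by
        rw [Real.log_div (by norm_num) (ne_of_gt hε0), Real.log_div one_ne_zero (ne_of_gt hε0),
          Real.log_one]
        ring
      have h4 : Real.log (1/ε) ≤ 1/ε - 1 := Real.log_le_sub_one_of_pos (by positivity)
      have h5 : Real.log 2 ≤ 1 := by
        have := Real.log_two_lt_d9
        linarith
      rw [slog]
      linarith
    have hlogslogε : Real.log (slog ε) ≤ -Real.log ε := by
      have := Real.log_le_log (by linarith : (0:ℝ) < slog ε) hslogε_le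
      rwa [Real.log_div one_ne_zero (ne_of_gt hε0), Real.log_one, zero_sub] at this
    -- expand the logarithm of the RHS
    have hM0 : (0:ℝ) < M := by linarith
    have hlogRHS : Real.log (M * (r/ε) ^ s * slog r ^ α * slog ε ^ β)
        = Real.log M + s * Real.log (r/ε) + α * Real.log (slog r) + β * Real.log (slog ε) := by
      rw [Real.log_mul (by positivity) (ne_of_gt hCe0),
        Real.log_mul (by positivity) (ne_of_gt hBr0),
        Real.log_mul (ne_of_gt hM0) (ne_of_gt hA0),
        Real.log_rpow (by positivity), Real.log_rpow (by linarith),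
        Real.log_rpow (by linarith)]
    have hlogrε : Real.log (r / ε) = Real.log r - Real.log ε :=
      Real.log_div (ne_of_gt hr0) (ne_of_gt hε0)
    -- log of the covering number is bounded
    have hlogcn : Real.log (coverNum Z ε) ≤ C + (s + β) * (-Real.log ε) := by
      have hstep : Real.log (coverNum Z ε)
          ≤ Real.log (M * (r/ε) ^ s * slog r ^ α * slog ε ^ β) := by
        rcases Nat.eq_zero_or_pos (coverNum Z ε) with h | h
        · rw [h]
          simpa using Real.log_nonneg hRHS1
        · exact Real.log_le_log (by exact_mod_cast h) hcn'
      rw [hlogRHS, hlogrε] at hstep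
      have hβle : β * Real.log (slog ε) ≤ β * (-Real.log ε) :=
        mul_le_mul_of_nonneg_left hlogslogε hβ
      have hsle : s * (Real.log r - Real.log ε) = s * Real.log r + s * (-Real.log ε) := by ring
      rw [hCdef]
      nlinarith [mul_le_mul_of_nonneg_left hlogslogε hβ]
    -- conclude the pointwise bound

    calc Real.log (coverNum Z ε) / (-Real.log ε)
        ≤ (C + (s + β) * (-Real.log ε)) / (-Real.log ε) := by gcongr
      _ = C / (-Real.log ε) + (s + β) := by
          rw [add_div, mul_div_assoc, div_self (ne_of_gt hlogε), mul_one]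
      _ = g ε := rfl
  -- pass to the limsup
  have hfg : (fun ε : ℝ => Real.log (coverNum Z ε) / (-Real.log ε)) ≤ᶠ[𝓝[>] (0:ℝ)] g :=
    eventually_of_mem hmem hkey
  have hcb : IsCoboundedUnder (· ≤ ·) (𝓝[>] (0:ℝ))
      (fun ε : ℝ => Real.log (coverNum Z ε) / (-Real.log ε)) := by
    apply isCoboundedUnder_le_of_eventually_le (x := 0) _
    filter_upwards [hmem] with ε hε
    have hlogε : 0 < -Real.log ε := by
      have := Real.log_neg hε.1 (by linarith [hε.2] : ε < 1)
      linarith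
    exact div_nonneg (Real.log_natCast_nonneg _) hlogε.le
  have hbd : IsBoundedUnder (· ≤ ·) (𝓝[>] (0:ℝ)) g := hglim.isBoundedUnder_le
  calc Filter.limsup (fun ε : ℝ => Real.log (coverNum Z ε) / (-Real.log ε)) (𝓝[>] (0:ℝ))
      ≤ Filter.limsup g (𝓝[>] (0:ℝ)) := limsup_le_limsup hfg hcb hbd
    _ = 0 + (s + β) := hglim.limsup_eq
    _ = β + s := by ring
end

section
/- Let X be a compact subset of a Banach space B with X bounded, and suppose X − X is (α,β)-almost (M,s)-homogeneous at the origin. Fix R ≥ 1 with X − X ⊆ B(0, R/2). Then there is a constant C (depending on M, s, α, β, R) such that for each n ≥ 1 there exist m_n ≤ C·n^{α+β} bounded linear functionals f₁,…,f_{m_n} ∈ B* of norm 1, such that for every z ∈ X − X with R·2^{-(n+1)} ≤ ‖z‖ ≤ R·2^{-n}, there exists j ≤ m_n with |f_j(z)| ≥ (1/4)‖z‖. -/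
open Metric Set Pointwise

lemma slog_nonneg {x : ℝ} (hx : 0 < x) : 0 ≤ slog x := by
  have hinv : x * (1/x) = 1 := by field_simp
  have h2 : (2:ℝ) ≤ x + 1/x := by nlinarith [sq_nonneg (x - 1), hinv, hx]
  have : (1:ℝ) ≤ x + 1/x := by linarith
  exact Real.log_nonneg this

lemma slog_le {x a b : ℝ} (hx : 0 < x) (ha : x ≤ a) (hb : 1/x ≤ b) :
    slog x ≤ Real.log (a + b) := by
  apply Real.log_le_log (by positivity)
  linarith

theorem single_scale_functionals
    {B : Type*} [NormedAddCommGroup B] [NormedSpace ℝ B] [CompleteSpace B]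
    (X : Set B) (hX : IsCompact X)
    (M s α β R : ℝ) (hM : 1 ≤ M) (hs : 0 ≤ s) (hα : 0 ≤ α) (hβ : 0 ≤ β) (hR : 1 ≤ R)
    (hXX : X - X ⊆ Metric.ball 0 (R/2))
    (hhom : AlmostHomogeneousAtOrigin (X - X) M s α β) :
    ∃ C : ℝ, 0 < C ∧ ∀ n : ℕ, 1 ≤ n →
      ∃ (m : ℕ) (f : Fin m → (B →L[ℝ] ℝ)),
        (m : ℝ) ≤ C * (n : ℝ) ^ (α + β) ∧ (∀ j, ‖f j‖ = 1) ∧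
        ∀ z ∈ X - X, R * (2:ℝ) ^ (-(n+1 : ℤ)) ≤ ‖z‖ → ‖z‖ ≤ R * (2:ℝ) ^ (-(n:ℤ)) →
          ∃ j, |f j z| ≥ (1/4) * ‖z‖ := by
  set K : ℝ := Real.log (2 * (R + 8)) with hK
  have hKpos : 0 < K := Real.log_pos (by linarith)
  refine ⟨M * 16 ^ s * K ^ α * K ^ β, by positivity, ?_⟩
  intro n hn
  set rn : ℝ := R * (2:ℝ) ^ (-(n:ℤ)) with hrn
  have hrnpos : 0 < rn := by positivity
  obtain ⟨t, htZ, htcov, htcard⟩ := hhom (2 * rn) (rn / 8) (by positivity) (by linarith)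
  set t' : Finset B := t.filter (fun z => rn / 4 ≤ ‖z‖) with ht'
  have ht'ne : ∀ z ∈ t', z ≠ 0 := by
    intro z hz
    have := (Finset.mem_filter.mp hz).2
    intro h0
    rw [h0, norm_zero] at this
    linarith
  have key : ∀ z ∈ t', ∃ g : B →L[ℝ] ℝ, ‖g‖ = 1 ∧ g z = ‖z‖ :=
    fun z hz => exists_dual_vector ℝ z (norm_ne_zero_iff.mpr (ht'ne z hz))
  choose g hg1 hg2 using key
  refine ⟨t'.card, fun j => g (t'.equivFin.symm j) (t'.equivFin.symm j).2, ?_, ?_, ?_⟩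
  · -- cardinality bound
    have h2n : (1:ℝ) ≤ (2:ℝ) ^ (n:ℕ) := one_le_pow₀ (by norm_num)
    have hzpow : (2:ℝ) ^ (-(n:ℤ)) = ((2:ℝ) ^ (n:ℕ))⁻¹ := by
      rw [zpow_neg, zpow_natCast]
    have hnpos : (0:ℝ) < n := by exact_mod_cast hn
    have hn1 : (1:ℝ) ≤ (n:ℝ) := by exact_mod_cast hn
    have hlog2 : Real.log 2 ≤ K := by
      apply Real.log_le_log (by norm_num); linarith
    -- slog bounds
    have hs1 : slog (2 * rn) ≤ K * n := by
      have h2np : (0:ℝ) < 2 ^ (n:ℕ) := by positivity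
      have h1 : 2 * rn ≤ R := by
        have hinvle : ((2:ℝ) ^ (n:ℕ))⁻¹ ≤ 2⁻¹ := by
          apply inv_anti₀ (by norm_num)
          calc (2:ℝ) = 2 ^ (1:ℕ) := by norm_num
          _ ≤ 2 ^ (n:ℕ) := pow_le_pow_right₀ (by norm_num) hn
        have := mul_le_mul_of_nonneg_left hinvle (by linarith : (0:ℝ) ≤ R)
        rw [hrn, hzpow]
        nlinarith
      have h2 : 1 / (2 * rn) ≤ (2:ℝ) ^ (n:ℕ) := by
        rw [hrn, hzpow, div_le_iff₀ (by positivity)]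
        have heq : (2:ℝ)^(n:ℕ) * (2 * (R * ((2:ℝ)^(n:ℕ))⁻¹)) = 2 * R := by
          field_simp
        linarith [heq]
      calc slog (2 * rn) ≤ Real.log (R + (2:ℝ) ^ (n:ℕ)) := slog_le (by positivity) h1 h2
        _ ≤ Real.log ((2 * (R + 8)) ^ (n:ℕ)) := by
            apply Real.log_le_log (by positivity)
            calc R + (2:ℝ) ^ (n:ℕ) ≤ R * 2^(n:ℕ) + 8 * 2^(n:ℕ) := by nlinarith
            _ = (R + 8) * 2 ^ (n:ℕ) := by ring
            _ ≤ (2 * (R + 8)) ^ (n:ℕ) := by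
                calc (R + 8) * 2 ^ (n:ℕ) ≤ (R+8)^(n:ℕ) * 2^(n:ℕ) := by
                      apply mul_le_mul_of_nonneg_right _ (by positivity)
                      calc R + 8 = (R+8)^(1:ℕ) := by norm_num
                      _ ≤ (R+8)^(n:ℕ) := pow_le_pow_right₀ (by linarith) hn
                _ = (2 * (R+8))^(n:ℕ) := by rw [mul_pow]; ring
        _ = n * K := by rw [Real.log_pow]
        _ = K * n := by ring
    have hs2 : slog (rn / 8) ≤ K * n := by
      have h1 : rn / 8 ≤ R := by
        rw [hrn, hzpow]
        have : ((2:ℝ) ^ (n:ℕ))⁻¹ ≤ 1 := by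
          apply inv_le_one_of_one_le₀ h2n
        nlinarith
      have h2 : 1 / (rn / 8) ≤ 8 * (2:ℝ) ^ (n:ℕ) := by
        rw [hrn, hzpow, div_le_iff₀ (by positivity)]
        have heq : 8 * (2:ℝ)^(n:ℕ) * (R * ((2:ℝ)^(n:ℕ))⁻¹ / 8) = R := by
          field_simp
        linarith [heq]
      calc slog (rn / 8) ≤ Real.log (R + 8 * (2:ℝ) ^ (n:ℕ)) := slog_le (by positivity) h1 h2
        _ ≤ Real.log ((2 * (R + 8)) ^ (n:ℕ)) := by
            apply Real.log_le_log (by positivity)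
            calc R + 8 * (2:ℝ) ^ (n:ℕ) ≤ R * 2^(n:ℕ) + 8 * 2^(n:ℕ) := by nlinarith
            _ = (R + 8) * 2 ^ (n:ℕ) := by ring
            _ ≤ (2 * (R + 8)) ^ (n:ℕ) := by
                calc (R + 8) * 2 ^ (n:ℕ) ≤ (R+8)^(n:ℕ) * 2^(n:ℕ) := by
                      apply mul_le_mul_of_nonneg_right _ (by positivity)
                      calc R + 8 = (R+8)^(1:ℕ) := by norm_num
                      _ ≤ (R+8)^(n:ℕ) := pow_le_pow_right₀ (by linarith) hn
                _ = (2 * (R+8))^(n:ℕ) := by rw [mul_pow]; ring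
        _ = n * K := by rw [Real.log_pow]
        _ = K * n := by ring
    have hsl1 : 0 ≤ slog (2 * rn) := slog_nonneg (by positivity)
    have hsl2 : 0 ≤ slog (rn / 8) := slog_nonneg (by positivity)
    have hratio : (2 * rn) / (rn / 8) = 16 := by field_simp; ring
    have hcard' : (t'.card : ℝ) ≤ (t.card : ℝ) := by
      exact_mod_cast Finset.card_filter_le t _
    calc (t'.card : ℝ) ≤ (t.card : ℝ) := hcard'
      _ ≤ M * ((2*rn)/(rn/8)) ^ s * slog (2*rn) ^ α * slog (rn/8) ^ β := htcard
      _ ≤ M * 16 ^ s * (K * n) ^ α * (K * n) ^ β := by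
          rw [hratio]
          apply mul_le_mul
          · apply mul_le_mul_of_nonneg_left _ (by positivity)
            exact Real.rpow_le_rpow hsl1 hs1 hα
          · exact Real.rpow_le_rpow hsl2 hs2 hβ
          · exact Real.rpow_nonneg hsl2 β
          · positivity
      _ = M * 16 ^ s * K ^ α * K ^ β * (n:ℝ) ^ (α + β) := by
          rw [Real.rpow_add hnpos,
            Real.mul_rpow (le_of_lt hKpos) (le_of_lt hnpos),
            Real.mul_rpow (le_of_lt hKpos) (le_of_lt hnpos)]
          ring
  · intro j
    exact hg1 _ _
  · -- main property
    intro z hz hlo hhi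
    have hlo' : rn / 2 ≤ ‖z‖ := by
      have : R * (2:ℝ) ^ (-(n+1:ℤ)) = rn / 2 := by
        rw [hrn, show (-(n+1:ℤ)) = (-(n:ℤ)) + (-1) by ring, zpow_add₀ (by norm_num : (2:ℝ) ≠ 0)]
        norm_num
        ring
      linarith [this ▸ hlo]
    have hzball : z ∈ (X - X) ∩ Metric.ball 0 (2 * rn) := by
      refine ⟨hz, ?_⟩
      rw [mem_ball_zero_iff]
      linarith
    obtain ⟨z₀, hz₀t, hz₀⟩ := by
      have := htcov hzball
      simpa using this
    have hdist : ‖z - z₀‖ < rn / 8 := by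
      rw [dist_eq_norm] at hz₀
      exact hz₀
    have hz₀norm : rn / 4 ≤ ‖z₀‖ := by
      have := norm_sub_norm_le z z₀
      have h := abs_norm_sub_norm_le z z₀
      have : ‖z‖ - ‖z₀‖ ≤ ‖z - z₀‖ := by
        calc ‖z‖ - ‖z₀‖ ≤ |‖z‖ - ‖z₀‖| := le_abs_self _
        _ ≤ ‖z - z₀‖ := h
      linarith
    have hz₀t' : z₀ ∈ t' := Finset.mem_filter.mpr ⟨hz₀t, hz₀norm⟩
    have main : ∀ (h : z₀ ∈ t'), (1/4) * ‖z‖ ≤ |g z₀ h z| := by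
      intro h
      set φ := g z₀ h with hφ
      have hφ1 : ‖φ‖ = 1 := hg1 _ _
      have hφ2 : φ z₀ = ‖z₀‖ := hg2 _ _
      have hb : |φ (z₀ - z)| ≤ ‖z₀ - z‖ := by
        calc |φ (z₀ - z)| = ‖φ (z₀ - z)‖ := (Real.norm_eq_abs _).symm
        _ ≤ ‖φ‖ * ‖z₀ - z‖ := φ.le_opNorm _
        _ = ‖z₀ - z‖ := by rw [hφ1, one_mul]
      have hzz : ‖z₀ - z‖ < rn / 8 := by rwa [norm_sub_rev]
      have hφz : φ z = φ z₀ - φ (z₀ - z) := by rw [map_sub]; ring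
      have hlow : ‖z₀‖ - ‖z₀ - z‖ ≤ |φ z| := by
        rw [hφz]
        calc ‖z₀‖ - ‖z₀ - z‖ ≤ φ z₀ - |φ (z₀ - z)| := by rw [hφ2]; linarith
        _ ≤ |φ z₀ - φ (z₀ - z)| := by
            have h3 : |φ z₀| - |φ (z₀ - z)| ≤ |φ z₀ - φ (z₀ - z)| :=
              abs_sub_abs_le_abs_sub (φ z₀) (φ (z₀ - z))
            have h2 : φ z₀ ≤ |φ z₀| := le_abs_self _
            linarith
      have hz₀z : ‖z‖ - rn/8 ≤ ‖z₀‖ := by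
        have hh : ‖z‖ - ‖z₀‖ ≤ ‖z - z₀‖ := by
          calc ‖z‖ - ‖z₀‖ ≤ |‖z‖ - ‖z₀‖| := le_abs_self _
          _ ≤ ‖z - z₀‖ := abs_norm_sub_norm_le z z₀
        linarith
      linarith
    refine ⟨t'.equivFin ⟨z₀, hz₀t'⟩, ?_⟩
    simp only [Equiv.symm_apply_apply]
    exact main _
end

section
/- Let X be a compact subset of a Banach space B such that X − X is (α,β)-almost (M,s)-homogeneous at the origin. Then for every δ > (1 + α + β)/2 there exists a separable Hilbert space H and a bounded linear map Φ : B → H and a constant C > 0 such that (1/C)·‖x − y‖/slog(‖x − y‖)^δ ≤ ‖Φ(x) − Φ(y)‖ ≤ C·‖x − y‖ for all x, y ∈ X with x ≠ y. -/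
open Metric Set Pointwise

lemma two_le_add_inv {x : ℝ} (hx : 0 < x) : 2 ≤ x + 1/x := by
  have h : x * (1/x) = 1 := by field_simp
  nlinarith [sq_nonneg (x - 1)]

lemma log_two_le_slog {x : ℝ} (hx : 0 < x) : Real.log 2 ≤ slog x :=
  Real.log_le_log (by norm_num) (two_le_add_inv hx)

lemma slog_pos {x : ℝ} (hx : 0 < x) : 0 < slog x :=
  lt_of_lt_of_le (Real.log_pos (by norm_num)) (log_two_le_slog hx)

lemma neg_log_le_slog {x : ℝ} (hx : 0 < x) : Real.log (1/x) ≤ slog x :=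
  Real.log_le_log (by positivity) (le_add_of_nonneg_left hx.le)

lemma slog_scale_le {R : ℝ} (hR : 1 ≤ R) (k : ℕ) :
    slog (2*R/2^k) ≤ ((k:ℝ)+1) * Real.log (4*R) := by
  have h2k : (0:ℝ) < 2^k := by positivity
  have h1 : (2:ℝ)*R/2^k + 1/(2*R/2^k) = 2*R/2^k + 2^k/(2*R) := by
    rw [one_div_div]
  have h2 : (2:ℝ)*R/2^k + 2^k/(2*R) ≤ 2*R * 2^(k+1) := by
    have e1 : (2:ℝ)*R/2^k ≤ 2*R := by
      rw [div_le_iff₀ h2k]; nlinarith [one_le_pow₀ (by norm_num : (1:ℝ) ≤ 2) (n := k)]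
    have e2 : (2:ℝ)^k/(2*R) ≤ 2^k := by
      rw [div_le_iff₀ (by linarith)]; nlinarith
    have e3 : (2:ℝ)*R + 2^k ≤ 2*R*2^(k+1) := by
      have : (1:ℝ) ≤ 2^k := one_le_pow₀ (by norm_num)
      rw [pow_succ]; nlinarith
    linarith
  have h3 : slog (2*R/2^k) ≤ Real.log (2*R*2^(k+1)) := by
    unfold slog
    rw [h1]
    exact Real.log_le_log (by positivity) h2
  have h4 : Real.log (2*R*2^(k+1)) = Real.log (2*R) + ((k:ℝ)+1) * Real.log 2 := by
    rw [Real.log_mul (by positivity : (0:ℝ) < 2*R).ne' (by positivity : (0:ℝ) < (2:ℝ)^(k+1)).ne', Real.log_pow]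
    push_cast; ring
  have h5 : Real.log (2*R) ≤ Real.log (4*R) := Real.log_le_log (by positivity) (by linarith)
  have h6 : Real.log 2 ≤ Real.log (4*R) := Real.log_le_log (by norm_num) (by linarith)
  have h7 : (0:ℝ) ≤ Real.log (2*R) := Real.log_nonneg (by linarith)
  have hk1 : (1:ℝ) ≤ (k:ℝ)+1 := by have := Nat.cast_nonneg (α := ℝ) k; linarith
  calc slog (2*R/2^k) ≤ Real.log (2*R) + ((k:ℝ)+1) * Real.log 2 := by rw [← h4]; exact h3
    _ ≤ ((k:ℝ)+1) * Real.log (2*R) + ((k:ℝ)+1) * Real.log 2 := by nlinarith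
    _ = ((k:ℝ)+1) * Real.log (4*R) := by
        rw [show (4:ℝ)*R = 2*(2*R) by ring, Real.log_mul two_ne_zero (by positivity : (0:ℝ) < 2*R).ne']
        ring

lemma slog_lower {R d : ℝ} (hR : 1 ≤ R) (k : ℕ) (hd : 0 < d) (hdk : d < 2*R/2^k) :
    (Real.log 2)^2 / (4 * Real.log (2*R)) * ((k:ℝ)+2) ≤ slog d := by
  have hT : Real.log 2 ≤ Real.log (2*R) := Real.log_le_log (by norm_num) (by linarith)
  have hl2 : 0 < Real.log 2 := Real.log_pos (by norm_num)
  have hTpos : 0 < Real.log (2*R) := lt_of_lt_of_le hl2 hT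
  set T := Real.log (2*R) with hTdef
  set κ := (Real.log 2)^2/(4*T) with hκdef
  have hκeq : κ * (4*T) = (Real.log 2)^2 := by
    rw [hκdef]; exact div_mul_cancel₀ _ (mul_pos (by norm_num) hTpos).ne'
  have hκpos : 0 < κ := by positivity
  have hk0 : (0:ℝ) ≤ (k:ℝ) := Nat.cast_nonneg k
  by_cases hcase : κ * ((k:ℝ)+2) ≤ Real.log 2
  · exact hcase.trans (log_two_le_slog hd)
  · push_neg at hcase
    have h2k : (0:ℝ) < 2^k := by positivity
    have h1d : (2:ℝ)^k/(2*R) ≤ 1/d := by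
      have := one_div_lt_one_div_of_lt hd hdk
      rw [one_div_div] at this
      linarith
    have hlog1d : (k:ℝ)*Real.log 2 - T ≤ Real.log (1/d) := by
      have := Real.log_le_log (by positivity) h1d
      rw [Real.log_div (by positivity : (0:ℝ) < (2:ℝ)^k).ne' (by positivity : (0:ℝ) < 2*R).ne',
        Real.log_pow] at this
      push_cast at this
      linarith
    have hs : (k:ℝ)*Real.log 2 - T ≤ slog d := hlog1d.trans (neg_log_le_slog hd)
    -- from hcase : log 2 < κ (k+2), get 4T < (k+2) log 2
    have h4T : 4*T < ((k:ℝ)+2)*Real.log 2 := by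
      have h := mul_lt_mul_of_pos_right hcase (by positivity : (0:ℝ) < 4*T)
      rw [show κ * ((k:ℝ)+2) * (4*T) = (κ * (4*T)) * ((k:ℝ)+2) by ring, hκeq] at h
      nlinarith
    have hκsmall : 4*κ ≤ Real.log 2 := by nlinarith
    -- k ≥ 3 in this case
    have hk2 : (2:ℝ) < (k:ℝ) := by nlinarith
    nlinarith

set_option maxHeartbeats 2000000 in
/-- Embedding into a (separable) Hilbert space, realised concretely as `ℓ² = lp (fun _ : ℕ => ℝ) 2`,
which is a separable Hilbert space. -/
theorem embedding_into_Hilbert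
    {B : Type*} [NormedAddCommGroup B] [NormedSpace ℝ B] [CompleteSpace B]
    (X : Set B) (hX : IsCompact X)
    (M s α β : ℝ) (hM : 1 ≤ M) (hs : 0 ≤ s) (hα : 0 ≤ α) (hβ : 0 ≤ β)
    (hhom : AlmostHomogeneousAtOrigin (X - X) M s α β)
    (δ : ℝ) (hδ : (1 + α + β)/2 < δ) :
    ∃ (Φ : B →L[ℝ] lp (fun _ : ℕ => ℝ) 2) (C : ℝ), 0 < C ∧
      ∀ x ∈ X, ∀ y ∈ X, x ≠ y →
        (1/C) * ‖x - y‖ / slog ‖x - y‖ ^ δ ≤ ‖Φ x - Φ y‖ ∧ ‖Φ x - Φ y‖ ≤ C * ‖x - y‖ := by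
  classical
  have hδpos : 0 < δ := by linarith
  obtain ⟨R₀, hR₀⟩ := hX.isBounded.subset_ball 0
  set R : ℝ := max R₀ 1 with hRdef
  have hR1 : (1:ℝ) ≤ R := le_max_right _ _
  have hRpos : (0:ℝ) < R := lt_of_lt_of_le one_pos hR1
  have hXR : X ⊆ ball (0:B) R := hR₀.trans (ball_subset_ball (le_max_left _ _))
  -- scales
  set rr : ℕ → ℝ := fun k => 2*R/2^k with hrrdef
  have hrrpos : ∀ k, 0 < rr k := fun k => by positivity
  have hrlt : ∀ k, rr (k+3) < rr k := by
    intro k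
    apply div_lt_div_of_pos_left (by positivity) (by positivity)
    have : (1:ℝ) < 2^(3:ℕ) := by norm_num
    calc (2:ℝ)^k = 2^k * 1 := by ring
      _ < 2^k * 2^(3:ℕ) := by
          apply mul_lt_mul_of_pos_left this (by positivity)
      _ = 2^(k+3) := by rw [← pow_add]
  choose t ht_sub ht_cov ht_card using fun k => hhom (rr k) (rr (k+3)) (hrrpos _) (hrlt _)
  -- the cardinality bound
  set A : ℝ := Real.log (4*R) with hAdef
  have hApos : 0 < A := Real.log_pos (by linarith)
  set C₁ : ℝ := M * 8^s * A^α * (4*A)^β with hC₁def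
  have hC₁pos : 0 < C₁ := by
    have : (0:ℝ) < M := by linarith
    positivity
  have hcard : ∀ k, ((t k).card : ℝ) ≤ C₁ * ((k:ℝ)+1)^(α+β) := by
    intro k
    have h0 := ht_card k
    have hrat : rr k / rr (k+3) = 8 := by
      have hp : (2:ℝ)^(k+3) = 2^k * 8 := by rw [pow_add]; norm_num
      have h2k : (0:ℝ) < 2^k := by positivity
      simp only [hrrdef]
      rw [hp]
      field_simp
    have hk1 : (0:ℝ) < (k:ℝ)+1 := by positivity
    have hsl1 : slog (rr k) ≤ ((k:ℝ)+1)*A := slog_scale_le hR1 k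
    have hsl2 : slog (rr (k+3)) ≤ ((k:ℝ)+1)*(4*A) := by
      have := slog_scale_le hR1 (k+3)
      push_cast at this
      have hk0 : (0:ℝ) ≤ (k:ℝ) := Nat.cast_nonneg k
      nlinarith
    have hp1 : slog (rr k) ^ α ≤ (((k:ℝ)+1)*A)^α :=
      Real.rpow_le_rpow (slog_pos (hrrpos k)).le hsl1 hα
    have hp2 : slog (rr (k+3)) ^ β ≤ (((k:ℝ)+1)*(4*A))^β :=
      Real.rpow_le_rpow (slog_pos (hrrpos (k+3))).le hsl2 hβ
    have hMpos : (0:ℝ) < M := by linarith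
    have h8s : (0:ℝ) < (8:ℝ)^s := by positivity
    have hslk : (0:ℝ) ≤ slog (rr k) ^ α := Real.rpow_nonneg (slog_pos (hrrpos k)).le _
    have hslk3 : (0:ℝ) ≤ slog (rr (k+3)) ^ β := Real.rpow_nonneg (slog_pos (hrrpos (k+3))).le _
    have step : ((t k).card : ℝ) ≤ M * 8^s * ((((k:ℝ)+1)*A)^α) * ((((k:ℝ)+1)*(4*A))^β) := by
      rw [hrat] at h0
      calc ((t k).card : ℝ) ≤ M * 8^s * slog (rr k) ^ α * slog (rr (k+3)) ^ β := h0
        _ ≤ M * 8^s * ((((k:ℝ)+1)*A)^α) * slog (rr (k+3)) ^ β := by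
            apply mul_le_mul_of_nonneg_right _ hslk3
            exact mul_le_mul_of_nonneg_left hp1 (by positivity)
        _ ≤ M * 8^s * ((((k:ℝ)+1)*A)^α) * ((((k:ℝ)+1)*(4*A))^β) := by
            apply mul_le_mul_of_nonneg_left hp2 (by positivity)
    calc ((t k).card : ℝ) ≤ M * 8^s * ((((k:ℝ)+1)*A)^α) * ((((k:ℝ)+1)*(4*A))^β) := step
      _ = C₁ * ((k:ℝ)+1)^(α+β) := by
          rw [Real.mul_rpow hk1.le hApos.le, Real.mul_rpow hk1.le (by positivity : (0:ℝ) ≤ 4*A),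
            Real.rpow_add hk1, hC₁def]
          ring
  -- the functionals
  choose f hf1 hf2 using fun z : B => exists_dual_vector'' ℝ z
  -- weights
  set a : ℕ → ℝ := fun k => ((k:ℝ)+2)^(-δ) with hadef
  have hapos : ∀ k, 0 < a k := fun k => Real.rpow_pos_of_pos (by positivity) _
  set w : ℕ → ℝ := fun n => if n.unpair.2 < (t n.unpair.1).card then a n.unpair.1 else 0 with hwdef
  set g : ℕ → B →L[ℝ] ℝ := fun n => f ((t n.unpair.1).toList.getD n.unpair.2 0) with hgdef
  have hgle : ∀ n (u : B), ‖g n u‖ ≤ ‖u‖ := by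
    intro n u
    calc ‖g n u‖ ≤ ‖g n‖ * ‖u‖ := (g n).le_opNorm u
      _ ≤ 1 * ‖u‖ := mul_le_mul_of_nonneg_right (hf1 _) (norm_nonneg u)
      _ = ‖u‖ := one_mul _
  -- summability of the weights
  set W : ℕ × ℕ → ℝ := fun p => (if p.2 < (t p.1).card then a p.1 else 0)^2 with hWdef
  have hWnn : ∀ p, 0 ≤ W p := fun p => sq_nonneg _
  have hW1 : ∀ kk, Summable (fun i => W (kk, i)) := by
    intro kk
    apply summable_of_ne_finset_zero (s := Finset.range (t kk).card)
    intro i hi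
    simp only [Finset.mem_range, not_lt] at hi
    simp only [hWdef]
    rw [if_neg (by omega)]
    norm_num
  have htsumW : ∀ kk, ∑' i, W (kk, i) = ((t kk).card : ℝ) * (a kk)^2 := by
    intro kk
    rw [tsum_eq_sum (s := Finset.range (t kk).card) ?_]
    · rw [Finset.sum_congr rfl (fun i hi => ?_), Finset.sum_const, Finset.card_range,
        nsmul_eq_mul]
      simp only [Finset.mem_range] at hi
      simp only [hWdef]
      rw [if_pos hi]
    · intro i hi
      simp only [Finset.mem_range, not_lt] at hi
      simp only [hWdef]
      rw [if_neg (by omega)]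
      norm_num
  have hexp : α + β - 2*δ < -1 := by linarith
  have hsummaj : Summable (fun k : ℕ => C₁ * ((k:ℝ)+1)^(α+β-2*δ)) := by
    apply Summable.mul_left
    have h1 : Summable (fun k : ℕ => ((k:ℝ))^(α+β-2*δ)) := Real.summable_nat_rpow.2 hexp
    have h2 := (summable_nat_add_iff 1).2 h1
    apply h2.congr
    intro k
    push_cast
    ring_nf
  have hW2 : Summable (fun kk => ∑' i, W (kk, i)) := by
    apply Summable.of_nonneg_of_le (fun kk => ?_) (fun kk => ?_) hsummaj
    · rw [htsumW kk]; positivity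
    · rw [htsumW kk]
      have h1 : ((t kk).card : ℝ) ≤ C₁ * ((kk:ℝ)+1)^(α+β) := hcard kk
      have h2 : (a kk)^2 = ((kk:ℝ)+2)^(-(2*δ)) := by
        rw [hadef]
        rw [show ((((kk:ℝ)+2)^(-δ))^2 : ℝ) = (((kk:ℝ)+2)^(-δ))^(2:ℕ) by norm_num,
          ← Real.rpow_natCast ((((kk:ℝ)+2))^(-δ)) 2, ← Real.rpow_mul (by positivity)]
        norm_num
        congr 1
        ring
      have h3 : ((kk:ℝ)+2)^(-(2*δ)) ≤ ((kk:ℝ)+1)^(-(2*δ)) := by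
        apply Real.rpow_le_rpow_of_nonpos (by positivity) (by linarith) (by linarith)
      have h4 : (0:ℝ) < ((kk:ℝ)+1)^(α+β) := Real.rpow_pos_of_pos (by positivity) _
      have h5 : (0:ℝ) ≤ (a kk)^2 := sq_nonneg _
      calc ((t kk).card : ℝ) * (a kk)^2 ≤ (C₁ * ((kk:ℝ)+1)^(α+β)) * (a kk)^2 :=
            mul_le_mul_of_nonneg_right h1 h5
        _ ≤ (C₁ * ((kk:ℝ)+1)^(α+β)) * ((kk:ℝ)+1)^(-(2*δ)) := by
            rw [h2]
            exact mul_le_mul_of_nonneg_left h3 (by positivity)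
        _ = C₁ * ((kk:ℝ)+1)^(α+β-2*δ) := by
            rw [mul_assoc, ← Real.rpow_add (by positivity)]
            ring_nf
  have hWsum : Summable W := (summable_prod_of_nonneg hWnn).2 ⟨hW1, hW2⟩
  have hsum : Summable (fun n => w n ^ 2) := by
    have he : (fun n => w n ^ 2) = W ∘ ⇑(Nat.pairEquiv.symm) := by
      funext n
      rfl
    rw [he]
    exact (Nat.pairEquiv.symm.summable_iff).2 hWsum
  have htsumnn : 0 ≤ ∑' n, w n ^ 2 := tsum_nonneg (fun n => sq_nonneg _)
  set S : ℝ := Real.sqrt (∑' n, w n ^ 2) with hSdef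
  have hS0 : 0 ≤ S := Real.sqrt_nonneg _
  have hSsq : S^2 = ∑' n, w n ^ 2 := Real.sq_sqrt htsumnn
  -- pointwise bound
  have hsqle : ∀ (u : B) n, ‖w n * g n u‖^2 ≤ w n ^2 * ‖u‖^2 := by
    intro u n
    rw [norm_mul, mul_pow]
    have h1 : ‖g n u‖^2 ≤ ‖u‖^2 := by
      have := hgle n u
      nlinarith [norm_nonneg (g n u)]
    have h2 : ‖w n‖^2 = w n ^2 := by rw [Real.norm_eq_abs, sq_abs]
    rw [h2]
    exact mul_le_mul_of_nonneg_left h1 (sq_nonneg _)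
  have hsummand : ∀ u : B, Summable (fun n => ‖w n * g n u‖^2) := by
    intro u
    apply Summable.of_nonneg_of_le (fun n => sq_nonneg _) (fun n => hsqle u n)
    exact hsum.mul_right _
  have hmem : ∀ u : B, Memℓp (fun n => w n * g n u) 2 := by
    intro u
    apply memℓp_gen
    have : ((2:ENNReal).toReal) = (2:ℝ) := by norm_num
    rw [this]
    apply (hsummand u).congr
    intro n
    rw [show ‖w n * g n u‖^(2:ℝ) = ‖w n * g n u‖^((2:ℕ):ℝ) by norm_num,
      Real.rpow_natCast]
  set Φ₀ : B →ₗ[ℝ] lp (fun _ : ℕ => ℝ) 2 :=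
    { toFun := fun u => ⟨fun n => w n * g n u, hmem u⟩
      map_add' := by
        intro u v
        apply lp.ext
        rw [lp.coeFn_add]
        funext n
        simp [mul_add]
      map_smul' := by
        intro c u
        apply lp.ext
        rw [lp.coeFn_smul]
        funext n
        simp [smul_eq_mul]
        ring } with hΦ₀def
  have hΦ₀app : ∀ (u : B) (n : ℕ), (Φ₀ u : ∀ _ : ℕ, ℝ) n = w n * g n u := fun u n => rfl
  have hnormle : ∀ u : B, ‖Φ₀ u‖ ≤ S * ‖u‖ := by
    intro u
    have hp2 : (0:ℝ) < (2:ENNReal).toReal := by norm_num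
    have h1 : ‖Φ₀ u‖ ^ ((2:ENNReal).toReal) = ∑' n, ‖(Φ₀ u : ∀ _ : ℕ, ℝ) n‖ ^ ((2:ENNReal).toReal) :=
      lp.norm_rpow_eq_tsum hp2 (Φ₀ u)
    have hconv : ∀ x : ℝ, 0 ≤ x → x ^ ((2:ENNReal).toReal) = x^2 := by
      intro x hx
      rw [show ((2:ENNReal).toReal) = ((2:ℕ):ℝ) by norm_num, Real.rpow_natCast]
    have h2 : ‖Φ₀ u‖ ^ (2:ℕ) = ∑' n, ‖w n * g n u‖ ^ 2 := by
      rw [← hconv _ (norm_nonneg _), h1]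
      congr 1
      funext n
      rw [hΦ₀app, hconv _ (norm_nonneg _)]
    have h3 : ∑' n, ‖w n * g n u‖ ^ 2 ≤ ∑' n, w n ^2 * ‖u‖^2 :=
      Summable.tsum_le_tsum (fun n => hsqle u n) (hsummand u) (hsum.mul_right _)
    have h4 : ∑' n, w n ^2 * ‖u‖^2 = (∑' n, w n ^2) * ‖u‖^2 := tsum_mul_right
    have h5 : ‖Φ₀ u‖ ^ 2 ≤ (S * ‖u‖)^2 := by
      rw [h2]
      calc ∑' n, ‖w n * g n u‖ ^ 2 ≤ (∑' n, w n ^2) * ‖u‖^2 := h3.trans_eq h4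
        _ = (S * ‖u‖)^2 := by rw [mul_pow, hSsq]
    have := Real.sqrt_le_sqrt h5
    rwa [Real.sqrt_sq (norm_nonneg _), Real.sqrt_sq (by positivity)] at this
  set Φ : B →L[ℝ] lp (fun _ : ℕ => ℝ) 2 := Φ₀.mkContinuous S hnormle with hΦdef
  have hΦapp : ∀ u : B, Φ u = Φ₀ u := fun u => rfl
  -- the constant
  set κ : ℝ := (Real.log 2)^2 / (4 * Real.log (2*R)) with hκdef
  have hκpos : 0 < κ := by
    have h1 : 0 < Real.log 2 := Real.log_pos (by norm_num)
    have h2 : 0 < Real.log (2*R) := lt_of_lt_of_le h1 (Real.log_le_log (by norm_num) (by linarith))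
    positivity
  have hκδpos : 0 < κ^δ := Real.rpow_pos_of_pos hκpos _
  set C : ℝ := max (max (2/κ^δ) S) 1 with hCdef
  have hC1 : (1:ℝ) ≤ C := le_max_right _ _
  have hCpos : 0 < C := lt_of_lt_of_le one_pos hC1
  have hCκ : 2/κ^δ ≤ C := le_trans (le_max_left _ _) (le_max_left _ _)
  have hCS : S ≤ C := le_trans (le_max_right _ _) (le_max_left _ _)
  refine ⟨Φ, C, hCpos, ?_⟩
  intro x hx y hy hxy
  set d : ℝ := ‖x - y‖ with hddef
  have hd : 0 < d := by
    rw [hddef]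
    exact norm_sub_pos_iff.2 hxy
  have hd2R : d < 2*R := by
    have h1 : ‖x‖ < R := mem_ball_zero_iff.1 (hXR hx)
    have h2 : ‖y‖ < R := mem_ball_zero_iff.1 (hXR hy)
    calc d ≤ ‖x‖ + ‖y‖ := norm_sub_le x y
      _ < 2*R := by linarith
  -- find the scale
  have hex : ∃ m : ℕ, 2*R/2^(m+1) ≤ d := by
    obtain ⟨m, hm⟩ := pow_unbounded_of_one_lt (2*R/d) (by norm_num : (1:ℝ) < 2)
    refine ⟨m, ?_⟩
    rw [div_le_iff₀ (by positivity)]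
    rw [div_lt_iff₀ hd] at hm
    have : (2:ℝ)^m ≤ 2^(m+1) := by
      apply pow_le_pow_right₀ (by norm_num)
      omega
    nlinarith
  set k : ℕ := Nat.find hex with hkdef
  have hk : 2*R/2^(k+1) ≤ d := Nat.find_spec hex
  have hdk : d < 2*R/2^k := by
    rcases Nat.eq_zero_or_pos k with h | h
    · rw [h]
      simpa using hd2R
    · have hmin := Nat.find_min hex (m := k - 1) (by omega)
      push_neg at hmin
      have : k - 1 + 1 = k := by omega
      rwa [this] at hmin
  -- cover at scale k
  have hmemcov : x - y ∈ (X - X) ∩ ball (0:B) (rr k) := by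
    constructor
    · exact Set.sub_mem_sub hx hy
    · rw [mem_ball_zero_iff]
      exact hdk
  obtain ⟨z₀, hz₀t, hz₀ball⟩ := by
    have := ht_cov k hmemcov
    simpa only [Set.mem_iUnion, exists_prop] using this
  have hz₀d : ‖x - y - z₀‖ < rr (k+3) := by
    rw [mem_ball, dist_eq_norm] at hz₀ball
    exact hz₀ball
  have hrk3 : rr (k+3) ≤ d/4 := by
    have h1 : rr (k+3) = (2*R/2^(k+1))/4 := by
      rw [hrrdef]
      rw [show k+3 = (k+1)+2 by omega, pow_add]
      field_simp
      ring
    rw [h1]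
    linarith
  have hz₀norm : 3*d/4 ≤ ‖z₀‖ := by
    have h1 : ‖x - y‖ - ‖z₀‖ ≤ ‖x - y - z₀‖ := norm_sub_norm_le _ _
    have h2 : ‖x - y - z₀‖ < d/4 := hz₀d.trans_le hrk3
    rw [← hddef] at h1
    linarith
  have hfval : d/2 ≤ f z₀ (x - y) := by
    have h1 : f z₀ (x - y - z₀) = f z₀ (x - y) - f z₀ z₀ := map_sub _ _ _
    have h2 : ‖f z₀ (x - y - z₀)‖ ≤ ‖x - y - z₀‖ := by
      calc ‖f z₀ (x - y - z₀)‖ ≤ ‖f z₀‖ * ‖x - y - z₀‖ := (f z₀).le_opNorm _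
        _ ≤ 1 * ‖x - y - z₀‖ := mul_le_mul_of_nonneg_right (hf1 _) (norm_nonneg _)
        _ = ‖x - y - z₀‖ := one_mul _
    have h3 : ‖x - y - z₀‖ ≤ d/4 := (hz₀d.trans_le hrk3).le
    have h4 : |f z₀ (x - y - z₀)| ≤ d/4 := by
      rw [← Real.norm_eq_abs]
      linarith
    have h5 := abs_le.1 h4
    have h6 : f z₀ z₀ = ‖z₀‖ := hf2 z₀
    have : f z₀ (x - y) = ‖z₀‖ + f z₀ (x - y - z₀) := by
      rw [h1, h6]; ring_nf
    rw [this]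
    linarith [h5.1]
  -- the index
  have hz₀mem : z₀ ∈ (t k).toList := Finset.mem_toList.2 hz₀t
  set i : ℕ := (t k).toList.idxOf z₀ with hidef
  have hi_len : i < (t k).toList.length := List.idxOf_lt_length_iff.2 hz₀mem
  have hi : i < (t k).card := by rwa [Finset.length_toList] at hi_len
  have hget : (t k).toList.getD i 0 = z₀ := by
    rw [List.getD_eq_getElem?_getD, List.getElem?_eq_getElem hi_len]
    simp only [Option.getD_some]
    exact List.getElem_idxOf hi_len
  set n : ℕ := Nat.pair k i with hndef
  have hun : n.unpair = (k, i) := Nat.unpair_pair k i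
  have hwn : w n = a k := by
    rw [hwdef]
    simp only [hun]
    rw [if_pos hi]
  have hgn : g n = f z₀ := by
    rw [hgdef]
    simp only [hun]
    rw [hget]
  -- coordinate bound
  have hcoord : ((Φ x - Φ y : lp (fun _ : ℕ => ℝ) 2) : ∀ _ : ℕ, ℝ) n = a k * f z₀ (x - y) := by
    rw [lp.coeFn_sub, Pi.sub_apply, hΦapp, hΦapp, hΦ₀app, hΦ₀app, hwn, hgn, ← mul_sub, ← map_sub]
  have hlow : a k * (d/2) ≤ ‖Φ x - Φ y‖ := by
    have h1 := lp.norm_apply_le_norm (by norm_num : (2:ENNReal) ≠ 0) (Φ x - Φ y) n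
    rw [hcoord] at h1
    have h2 : a k * (d/2) ≤ ‖a k * f z₀ (x - y)‖ := by
      rw [Real.norm_eq_abs]
      have := hapos k
      calc a k * (d/2) ≤ a k * f z₀ (x - y) := by
            apply mul_le_mul_of_nonneg_left hfval this.le
        _ ≤ |a k * f z₀ (x - y)| := le_abs_self _
    linarith
  -- slog bound
  have hslog : κ * ((k:ℝ)+2) ≤ slog d := slog_lower hR1 k hd hdk
  have hslogd : 0 < slog d := slog_pos hd
  have hσpos : 0 < slog d ^ δ := Real.rpow_pos_of_pos hslogd _
  constructor
  · -- lower bound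
    rw [div_le_iff₀ hσpos]
    have hσκ : κ^δ * (((k:ℝ)+2)^δ) ≤ slog d ^ δ := by
      rw [← Real.mul_rpow hκpos.le (by positivity)]
      exact Real.rpow_le_rpow (by positivity) hslog hδpos.le
    have hak : a k * ((k:ℝ)+2)^δ = 1 := by
      rw [hadef, ← Real.rpow_add (by positivity)]
      norm_num
    have key := mul_le_mul hσκ hlow (by positivity) hσpos.le
    have e : (κ^δ * (((k:ℝ)+2)^δ)) * (a k * (d/2)) = κ^δ * (d/2) * (a k * ((k:ℝ)+2)^δ) := by
      ring
    rw [e, hak, mul_one] at key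
    have h1C : 1/C ≤ κ^δ/2 := by
      have := one_div_le_one_div_of_le (by positivity : (0:ℝ) < 2/κ^δ) hCκ
      rwa [one_div_div] at this
    have hd0 : (0:ℝ) ≤ d := hd.le
    nlinarith [key, mul_le_mul_of_nonneg_right h1C hd0]
  · -- upper bound
    have h1 : Φ x - Φ y = Φ (x - y) := by rw [map_sub]
    rw [h1, hΦapp]
    calc ‖Φ₀ (x - y)‖ ≤ S * ‖x - y‖ := hnormle _
      _ ≤ C * ‖x - y‖ := mul_le_mul_of_nonneg_right hCS (norm_nonneg _)
end

section
/- Let B, B' be Banach spaces, X ⊆ B compact with X − X bounded and (α,β)-almost (M,s)-homogeneous at the origin, and let Φ : B → B' be a bounded linear map which is δ-almost bi-Lipschitz on X for some δ > 1, i.e. (1/C)·‖x−y‖/slog(‖x−y‖)^δ ≤ ‖Φx − Φy‖ ≤ C‖x−y‖ for all x,y ∈ X. Then Φ(X) − Φ(X) is (α + δs, β)-almost (M', s)-homogeneous at the origin for some constant M' depending on M, s, α, β, δ, C and the diameter of X. -/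
open Metric Set Pointwise

lemma slog_mul_le {a b : ℝ} (ha : 0 < a) (hb : 0 < b) : slog (a * b) ≤ slog a + slog b := by
  unfold slog
  rw [← Real.log_mul (by positivity) (by positivity)]
  apply Real.log_le_log (by positivity)
  have h : (a + 1/a) * (b + 1/b) = a*b + 1/(a*b) + (a/b + b/a) := by field_simp; ring
  have h2 : 0 < a/b := by positivity
  have h3 : 0 < b/a := by positivity
  linarith

lemma add_rpow_le {a b p : ℝ} (ha : 0 < a) (hb : 0 < b) (hp : 1 ≤ p) :
    a ^ p + b ^ p ≤ (a + b) ^ p := by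
  have hab : (0:ℝ) < a + b := by linarith
  have h1 : a ^ p = a ^ (p-1) * a := by
    rw [← Real.rpow_add_one ha.ne']; ring_nf
  have h2 : b ^ p = b ^ (p-1) * b := by
    rw [← Real.rpow_add_one hb.ne']; ring_nf
  have h3 : (a + b) ^ p = (a+b) ^ (p-1) * (a+b) := by
    rw [← Real.rpow_add_one hab.ne']; ring_nf
  have h4 : a ^ (p-1) ≤ (a+b) ^ (p-1) := Real.rpow_le_rpow ha.le (by linarith) (by linarith)
  have h5 : b ^ (p-1) ≤ (a+b) ^ (p-1) := Real.rpow_le_rpow hb.le (by linarith) (by linarith)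
  have h6 : 0 < a ^ (p-1) := Real.rpow_pos_of_pos ha _
  have h7 : 0 < b ^ (p-1) := Real.rpow_pos_of_pos hb _
  rw [h1, h2, h3]
  nlinarith

lemma slog_rpow_le {x p : ℝ} (hx : 0 < x) (hp : 1 ≤ p) : slog (x ^ p) ≤ p * slog x := by
  unfold slog
  have h1 : 1/(x^p) = (1/x)^p := by
    rw [one_div, one_div, Real.inv_rpow hx.le]
  rw [h1, ← Real.log_rpow (by positivity)]
  apply Real.log_le_log (by positivity)
  exact add_rpow_le hx (by positivity) hp

lemma slog_anti {r u : ℝ} (hr : 0 < r) (hru : r ≤ u) (hu : u ≤ 1) : slog u ≤ slog r := by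
  have hu0 : 0 < u := lt_of_lt_of_le hr hru
  apply Real.log_le_log (by positivity)
  have key : r + 1/r - (u + 1/u) = (u - r)*(1 - r*u)/(r*u) := by field_simp; ring
  have h1 : 0 ≤ (u - r)*(1 - r*u)/(r*u) := by
    apply div_nonneg _ (by positivity)
    apply mul_nonneg (by linarith)
    nlinarith
  linarith

lemma slog_le_log {u D : ℝ} (h1 : 1 ≤ u) (hD : u ≤ D) : slog u ≤ Real.log (D + 1) := by
  apply Real.log_le_log (by positivity)
  have : 1/u ≤ 1 := by rw [div_le_one (by linarith)]; exact h1
  linarith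

lemma slog_self_le {t : ℝ} (ht : Real.log 2 ≤ t) : slog t ≤ t + 1/Real.log 2 := by
  have hl2 : 0 < Real.log 2 := Real.log_pos (by norm_num)
  have ht0 : 0 < t := lt_of_lt_of_le hl2 ht
  have h1 : slog t ≤ t + 1/t - 1 := by
    have := Real.log_le_sub_one_of_pos (show (0:ℝ) < t + 1/t by positivity)
    unfold slog; linarith
  have h2 : 1/t ≤ 1/Real.log 2 := by
    apply one_div_le_one_div_of_le hl2 ht
  linarith

set_option maxHeartbeats 1600000 in
theorem invariance_of_almost_homogeneity'
    {B B' : Type*} [NormedAddCommGroup B] [NormedSpace ℝ B] [CompleteSpace B]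
    [NormedAddCommGroup B'] [NormedSpace ℝ B'] [CompleteSpace B']
    (X : Set B) (hX : IsCompact X) (hbdd : Bornology.IsBounded (X - X))
    (M s α β : ℝ) (hM : 1 ≤ M) (hs : 0 ≤ s) (hα : 0 ≤ α) (hβ : 0 ≤ β)
    (hhom : ∀ r ρ : ℝ, 0 < ρ → ρ < r →
      ∃ t : Finset B, ↑t ⊆ (X - X) ∧ ((X - X) ∩ Metric.ball 0 r ⊆ ⋃ z ∈ t, Metric.ball z ρ) ∧
        (t.card : ℝ) ≤ M * (r/ρ) ^ s * slog r ^ α * slog ρ ^ β)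
    (Φ : B →L[ℝ] B') (δ C : ℝ) (hδ : 1 < δ) (hC : 0 < C)
    (hbil : ∀ x ∈ X, ∀ y ∈ X, x ≠ y →
      (1/C) * ‖x - y‖ / slog ‖x - y‖ ^ δ ≤ ‖Φ x - Φ y‖ ∧ ‖Φ x - Φ y‖ ≤ C * ‖x - y‖) :
    ∃ M' : ℝ, 0 < M' ∧
      ∀ r ρ : ℝ, 0 < ρ → ρ < r →
      ∃ t : Finset B', ↑t ⊆ ((Φ '' X) - (Φ '' X)) ∧
        (((Φ '' X) - (Φ '' X)) ∩ Metric.ball 0 r ⊆ ⋃ z ∈ t, Metric.ball z ρ) ∧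
        (t.card : ℝ) ≤ M' * (r/ρ) ^ s * slog r ^ (α + δ * s) * slog ρ ^ β := by
  classical
  have hl2 : 0 < Real.log 2 := Real.log_pos (by norm_num)
  obtain ⟨D0, hD0⟩ := hbdd.exists_norm_le
  obtain ⟨D, hDdef⟩ : ∃ D : ℝ, D = max D0 1 := ⟨_, rfl⟩
  have hD1 : (1:ℝ) ≤ D := hDdef ▸ le_max_right _ _
  obtain ⟨L, hLdef⟩ : ∃ L : ℝ, L = Real.log (D + 1) := ⟨_, rfl⟩
  have hL : Real.log 2 ≤ L := by rw [hLdef]; exact Real.log_le_log (by norm_num) (by linarith)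
  have hL0 : 0 < L := lt_of_lt_of_le hl2 hL
  obtain ⟨K, hKdef⟩ : ∃ K : ℝ, K = C * (L/Real.log 2) ^ δ + C + 2 * (1/Real.log 2) ^ δ := ⟨_, rfl⟩
  have hK : 0 < K := by rw [hKdef]; positivity
  have hK1 : C * (L/Real.log 2) ^ δ ≤ K := by
    rw [hKdef]
    have h1 : 0 < 2 * (1/Real.log 2) ^ δ := by positivity
    linarith
  have hK2 : C ≤ K := by
    rw [hKdef]
    have h1 : 0 < 2 * (1/Real.log 2) ^ δ := by positivity
    have h2 : 0 ≤ C * (L/Real.log 2) ^ δ := by positivity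
    linarith
  have hK3 : 2 * (1/Real.log 2) ^ δ ≤ K := by
    rw [hKdef]
    have h2 : 0 ≤ C * (L/Real.log 2) ^ δ := by positivity
    linarith
  have hδ0 : (0:ℝ) ≤ δ := by linarith
  -- generic fact: 2 ≤ K * slog r ^ δ
  have two_le : ∀ r : ℝ, 0 < r → 2 ≤ K * slog r ^ δ := by
    intro r hr
    have hsr : 0 < slog r := slog_pos hr
    have hsrδ : 0 < slog r ^ δ := Real.rpow_pos_of_pos hsr δ
    have fact1 : 1 ≤ (1/Real.log 2) ^ δ * slog r ^ δ := by
      rw [← Real.mul_rpow (by positivity) hsr.le]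
      have h1 : 1 ≤ (1/Real.log 2) * slog r := by
        rw [div_mul_eq_mul_div, one_mul, le_div_iff₀ hl2]
        simpa using log_two_le_slog hr
      calc (1:ℝ) = 1 ^ δ := (Real.one_rpow δ).symm
        _ ≤ ((1/Real.log 2) * slog r) ^ δ := Real.rpow_le_rpow (by norm_num) h1 hδ0
    calc (2:ℝ) = 2 * 1 := by ring
      _ ≤ 2 * ((1/Real.log 2) ^ δ * slog r ^ δ) :=
          mul_le_mul_of_nonneg_left fact1 (by norm_num)
      _ = (2 * (1/Real.log 2) ^ δ) * slog r ^ δ := by ring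
      _ ≤ K * slog r ^ δ := mul_le_mul_of_nonneg_right hK3 hsrδ.le
  -- key lemma
  have key : ∀ r : ℝ, 0 < r → ∀ x ∈ X, ∀ y ∈ X,
      ‖Φ x - Φ y‖ < r → ‖x - y‖ < K * r * slog r ^ δ := by
    intro r hr x hx y hy hΦxy
    have hsr : 0 < slog r := slog_pos hr
    have hsrδ : 0 < slog r ^ δ := Real.rpow_pos_of_pos hsr δ
    by_cases hne : x = y
    · subst hne; simp only [sub_self, norm_zero]; positivity
    · obtain ⟨hlow, -⟩ := hbil x hx y hy hne
      set u := ‖x - y‖ with hudef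
      have hu0 : 0 < u := norm_pos_iff.mpr (sub_ne_zero.mpr hne)
      have huD : u ≤ D := le_trans (hD0 _ (Set.sub_mem_sub hx hy)) (by rw [hDdef]; exact le_max_left _ _)
      have hsu : 0 < slog u := slog_pos hu0
      have hsuδ : 0 < slog u ^ δ := Real.rpow_pos_of_pos hsu δ
      have h1 : (1/C) * u / slog u ^ δ < r := lt_of_le_of_lt hlow hΦxy
      rw [div_lt_iff₀ hsuδ] at h1
      have hu_lt : u < C * r * slog u ^ δ := by
        have hC' : C * ((1/C) * u) = u := by field_simp
        have h2 := mul_lt_mul_of_pos_left h1 hC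
        rw [hC'] at h2
        linarith
      by_cases hur : u ≤ r
      · have h2 := two_le r hr
        have h3 : 2 * r ≤ K * slog r ^ δ * r := mul_le_mul_of_nonneg_right h2 hr.le
        have h4 : K * slog r ^ δ * r = K * r * slog r ^ δ := by ring
        linarith
      · push_neg at hur
        by_cases hu1 : u ≤ 1
        · have h3 : slog u ≤ slog r := slog_anti hr hur.le hu1
          have h4 : slog u ^ δ ≤ slog r ^ δ := Real.rpow_le_rpow hsu.le h3 hδ0
          calc u < C * r * slog u ^ δ := hu_lt
            _ ≤ C * r * slog r ^ δ := by
                have := mul_le_mul_of_nonneg_left h4 (mul_nonneg hC.le hr.le)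
                linarith
            _ ≤ K * r * slog r ^ δ :=
                mul_le_mul_of_nonneg_right (mul_le_mul_of_nonneg_right hK2 hr.le) hsrδ.le
        · push_neg at hu1
          have h3 : slog u ≤ L := hLdef ▸ slog_le_log hu1.le huD
          have h4 : slog u ^ δ ≤ L ^ δ := Real.rpow_le_rpow hsu.le h3 hδ0
          have h6 : L ^ δ = (L/Real.log 2) ^ δ * Real.log 2 ^ δ := by
            rw [← Real.mul_rpow (by positivity) hl2.le, div_mul_cancel₀ _ hl2.ne']
          have h7 : Real.log 2 ^ δ ≤ slog r ^ δ :=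
            Real.rpow_le_rpow hl2.le (log_two_le_slog hr) hδ0
          have hLp : 0 < (L/Real.log 2) ^ δ := by positivity
          calc u < C * r * slog u ^ δ := hu_lt
            _ ≤ C * r * L ^ δ := by
                have := mul_le_mul_of_nonneg_left h4 (mul_nonneg hC.le hr.le)
                linarith
            _ = (C * (L/Real.log 2) ^ δ) * r * Real.log 2 ^ δ := by rw [h6]; ring
            _ ≤ (C * (L/Real.log 2) ^ δ) * r * slog r ^ δ :=
                mul_le_mul_of_nonneg_left h7 (by positivity)
            _ ≤ K * r * slog r ^ δ :=
                mul_le_mul_of_nonneg_right (mul_le_mul_of_nonneg_right hK1 hr.le) hsrδ.le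
  -- constants for the final bound
  have hΦn : 0 < ‖Φ‖ + 1 := by positivity
  obtain ⟨J, hJ⟩ : ∃ J : ℝ, J = 1/Real.log 2 := ⟨_, rfl⟩
  have hJ0 : 0 < J := by rw [hJ]; positivity
  have hJl2 : J * Real.log 2 = 1 := by rw [hJ]; field_simp
  obtain ⟨c₁, hc₁def⟩ : ∃ c : ℝ, c = (slog K + δ*J)*J + 1 + δ := ⟨_, rfl⟩
  have hsK : 0 < slog K := slog_pos hK
  have hc₁ : 0 < c₁ := by
    rw [hc₁def]
    have h1 : 0 < (slog K + δ*J)*J :=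
      mul_pos (by nlinarith [mul_pos (lt_trans one_pos hδ) hJ0]) hJ0
    linarith
  obtain ⟨E, hEdef⟩ : ∃ E : ℝ, E = slog (1/(‖Φ‖+1)) := ⟨_, rfl⟩
  have hE : 0 < E := by rw [hEdef]; exact slog_pos (by positivity)
  obtain ⟨c₂, hc₂def⟩ : ∃ c : ℝ, c = 1 + E*J := ⟨_, rfl⟩
  have hc₂ : 0 < c₂ := by
    rw [hc₂def]
    have : 0 < E*J := mul_pos hE hJ0
    linarith
  refine ⟨M * (K*(‖Φ‖+1)) ^ s * c₁ ^ α * c₂ ^ β, by positivity, ?_⟩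
  intro r ρ hρ hrρ
  have hr : 0 < r := lt_trans hρ hrρ
  have hsr : 0 < slog r := slog_pos hr
  have hsρ : 0 < slog ρ := slog_pos hρ
  have hsrδ : 0 < slog r ^ δ := Real.rpow_pos_of_pos hsr δ
  obtain ⟨r₁, hr₁def⟩ : ∃ x : ℝ, x = K * r * slog r ^ δ := ⟨_, rfl⟩
  obtain ⟨ρ₁, hρ₁def⟩ : ∃ x : ℝ, x = ρ / (‖Φ‖ + 1) := ⟨_, rfl⟩
  have hr₁ : 0 < r₁ := by rw [hr₁def]; positivity
  have hρ₁ : 0 < ρ₁ := by rw [hρ₁def]; positivity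
  have hρ₁ρ : ρ₁ ≤ ρ := by
    rw [hρ₁def, div_le_iff₀ hΦn]
    linarith [mul_nonneg hρ.le (norm_nonneg Φ)]
  have hrr₁ : r < r₁ := by
    have h2 := two_le r hr
    have h3 : 2 * r ≤ K * slog r ^ δ * r := mul_le_mul_of_nonneg_right h2 hr.le
    have h4 : K * slog r ^ δ * r = K * r * slog r ^ δ := by ring
    rw [hr₁def]
    linarith
  obtain ⟨t, htZ, htcov, htcard⟩ := hhom r₁ ρ₁ hρ₁ (lt_of_le_of_lt hρ₁ρ (lt_trans hrρ hrr₁))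
  refine ⟨t.image (fun z => Φ z), ?_, ?_, ?_⟩
  · intro w hw
    simp only [Finset.coe_image, Set.mem_image, Finset.mem_coe] at hw
    obtain ⟨z, hz, rfl⟩ := hw
    obtain ⟨x, hx, y, hy, rfl⟩ := Set.mem_sub.mp (htZ hz)
    rw [map_sub]
    exact Set.sub_mem_sub (Set.mem_image_of_mem _ hx) (Set.mem_image_of_mem _ hy)
  · rintro w ⟨hwZ, hwB⟩
    obtain ⟨p, hp, q, hq, rfl⟩ := Set.mem_sub.mp hwZ
    obtain ⟨a, ha, rfl⟩ := hp
    obtain ⟨b, hb, rfl⟩ := hq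
    rw [mem_ball_zero_iff] at hwB
    have hab : ‖a - b‖ < r₁ := by
      rw [hr₁def]
      exact key r hr a ha b hb hwB
    have habZ : a - b ∈ X - X := Set.sub_mem_sub ha hb
    have hmem : a - b ∈ ⋃ z ∈ t, ball z ρ₁ := htcov ⟨habZ, mem_ball_zero_iff.mpr hab⟩
    rw [Set.mem_iUnion₂] at hmem
    obtain ⟨z, hz, hdist⟩ := hmem
    rw [mem_ball, dist_eq_norm] at hdist
    refine Set.mem_iUnion₂.mpr ⟨Φ z, Finset.mem_image_of_mem _ hz, ?_⟩
    rw [mem_ball, dist_eq_norm]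
    have heq : Φ a - Φ b - Φ z = Φ (a - b - z) := by rw [map_sub, map_sub]
    rw [heq]
    calc ‖Φ (a - b - z)‖ ≤ ‖Φ‖ * ‖a - b - z‖ := Φ.le_opNorm _
      _ ≤ ‖Φ‖ * ρ₁ := mul_le_mul_of_nonneg_left hdist.le (norm_nonneg Φ)
      _ < ρ := by
          rw [hρ₁def, ← mul_div_assoc, div_lt_iff₀ hΦn]
          have h0 : ‖Φ‖ * ρ ≤ ρ * ‖Φ‖ := by ring_nf; exact le_refl _
          nlinarith [hρ]
  · have hcard1 : (((t.image (fun z => Φ z)).card : ℕ) : ℝ) ≤ (t.card : ℝ) :=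
      Nat.cast_le.mpr Finset.card_image_le
    have hsr₁ : 0 < slog r₁ := slog_pos hr₁
    have hsρ₁ : 0 < slog ρ₁ := slog_pos hρ₁
    have hdiv : r₁ / ρ₁ = (K * (‖Φ‖+1)) * ((r/ρ) * slog r ^ δ) := by
      rw [hr₁def, hρ₁def]; field_simp
    have e1 : (r₁/ρ₁) ^ s = (K*(‖Φ‖+1)) ^ s * ((r/ρ) ^ s * slog r ^ (δ*s)) := by
      rw [hdiv, Real.mul_rpow (by positivity)
        (mul_nonneg (div_nonneg hr.le hρ.le) (Real.rpow_nonneg hsr.le δ)),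
        Real.mul_rpow (div_nonneg hr.le hρ.le) (Real.rpow_nonneg hsr.le δ),
        ← Real.rpow_mul hsr.le]
    have hq : 0 ≤ slog K + δ*J := by
      have h0 : 0 ≤ δ*J := mul_nonneg hδ0 hJ0.le
      linarith
    have e2 : slog r₁ ≤ c₁ * slog r := by
      have h1 : slog r₁ ≤ slog K + slog (r * slog r ^ δ) := by
        rw [hr₁def, mul_assoc]
        exact slog_mul_le hK (mul_pos hr hsrδ)
      have h2 : slog (r * slog r ^ δ) ≤ slog r + slog (slog r ^ δ) := slog_mul_le hr hsrδ
      have h3 : slog (slog r ^ δ) ≤ δ * slog (slog r) := slog_rpow_le hsr hδ.le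
      have h4 : slog (slog r) ≤ slog r + J := by
        rw [hJ]; exact slog_self_le (log_two_le_slog hr)
      have h4' : δ * slog (slog r) ≤ δ * (slog r + J) :=
        mul_le_mul_of_nonneg_left h4 hδ0
      have h5 : slog K + δ*J ≤ (slog K + δ*J)*J * slog r := by
        have h6 := mul_le_mul_of_nonneg_left (log_two_le_slog hr) (mul_nonneg hq hJ0.le)
        have h7 : (slog K + δ*J)*J * Real.log 2 = slog K + δ*J := by
          rw [mul_assoc, hJl2, mul_one]
        linarith
      rw [hc₁def]
      linarith [h1, h2, h3, h4', h5]
    have e3 : slog ρ₁ ≤ c₂ * slog ρ := by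
      have h1 : slog ρ₁ ≤ slog ρ + E := by
        have hρ₁' : ρ₁ = ρ * (1/(‖Φ‖+1)) := by rw [hρ₁def]; ring
        rw [hρ₁', hEdef]
        exact slog_mul_le hρ (by positivity)
      have h5 : E ≤ E*J * slog ρ := by
        have h6 := mul_le_mul_of_nonneg_left (log_two_le_slog hρ) (mul_nonneg hE.le hJ0.le)
        have h7 : E*J * Real.log 2 = E := by
          rw [mul_assoc, hJl2, mul_one]
        linarith
      rw [hc₂def]
      linarith [h1, h5]
    have hX1 : slog r₁ ^ α ≤ c₁ ^ α * slog r ^ α := by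
      calc slog r₁ ^ α ≤ (c₁ * slog r) ^ α :=
            Real.rpow_le_rpow hsr₁.le e2 hα
        _ = c₁ ^ α * slog r ^ α := Real.mul_rpow hc₁.le hsr.le
    have hY1 : slog ρ₁ ^ β ≤ c₂ ^ β * slog ρ ^ β := by
      calc slog ρ₁ ^ β ≤ (c₂ * slog ρ) ^ β :=
            Real.rpow_le_rpow hsρ₁.le e3 hβ
        _ = c₂ ^ β * slog ρ ^ β := Real.mul_rpow hc₂.le hsρ.le
    have hM0 : (0:ℝ) ≤ M := by linarith
    have hX0 : (0:ℝ) ≤ (r₁/ρ₁) ^ s := Real.rpow_nonneg (div_nonneg hr₁.le hρ₁.le) s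
    calc (((t.image (fun z => Φ z)).card : ℕ) : ℝ)
        ≤ (t.card : ℝ) := hcard1
      _ ≤ M * (r₁/ρ₁) ^ s * slog r₁ ^ α * slog ρ₁ ^ β := htcard
      _ ≤ M * (r₁/ρ₁) ^ s * slog r₁ ^ α * (c₂ ^ β * slog ρ ^ β) :=
          mul_le_mul_of_nonneg_left hY1
            (mul_nonneg (mul_nonneg hM0 hX0) (Real.rpow_nonneg hsr₁.le α))
      _ ≤ M * (r₁/ρ₁) ^ s * (c₁ ^ α * slog r ^ α) * (c₂ ^ β * slog ρ ^ β) :=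
          mul_le_mul_of_nonneg_right
            (mul_le_mul_of_nonneg_left hX1 (mul_nonneg hM0 hX0))
            (mul_nonneg (Real.rpow_nonneg hc₂.le β) (Real.rpow_nonneg hsρ.le β))
      _ = M * ((K*(‖Φ‖+1)) ^ s * ((r/ρ) ^ s * slog r ^ (δ*s))) * (c₁ ^ α * slog r ^ α)
            * (c₂ ^ β * slog ρ ^ β) := by rw [e1]
      _ = M * (K*(‖Φ‖+1)) ^ s * c₁ ^ α * c₂ ^ β * (r/ρ) ^ s
            * (slog r ^ α * slog r ^ (δ*s)) * slog ρ ^ β := by ring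
      _ = M * (K*(‖Φ‖+1)) ^ s * c₁ ^ α * c₂ ^ β * (r/ρ) ^ s
            * slog r ^ (α + δ*s) * slog ρ ^ β := by rw [Real.rpow_add hsr]

theorem invariance_of_almost_homogeneity
    {B B' : Type*} [NormedAddCommGroup B] [NormedSpace ℝ B] [CompleteSpace B]
    [NormedAddCommGroup B'] [NormedSpace ℝ B'] [CompleteSpace B']
    (X : Set B) (hX : IsCompact X) (hbdd : Bornology.IsBounded (X - X))
    (M s α β : ℝ) (hM : 1 ≤ M) (hs : 0 ≤ s) (hα : 0 ≤ α) (hβ : 0 ≤ β)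
    (hhom : AlmostHomogeneousAtOrigin (X - X) M s α β)
    (Φ : B →L[ℝ] B') (δ C : ℝ) (hδ : 1 < δ) (hC : 0 < C)
    (hbil : ∀ x ∈ X, ∀ y ∈ X, x ≠ y →
      (1/C) * ‖x - y‖ / slog ‖x - y‖ ^ δ ≤ ‖Φ x - Φ y‖ ∧ ‖Φ x - Φ y‖ ≤ C * ‖x - y‖) :
    ∃ M' : ℝ, 0 < M' ∧
      AlmostHomogeneousAtOrigin ((Φ '' X) - (Φ '' X)) M' s (α + δ * s) β := by
  obtain ⟨M', hM', h⟩ := invariance_of_almost_homogeneity' X hX hbdd M s α β hM hs hα hβ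
    hhom Φ δ C hδ hC hbil
  exact ⟨M', hM', h⟩
end
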